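/- For every simple mixed graph G on n ≥ 1 vertices, ν_{2n−1}(G) ≤ (4·e(G) + 2·a(G)) / (2n − 1) ≤ ν₁(G). -/

import Mathlib

set_option linter.unusedSectionVars false

open Matrix Finset Polynomial

variable {V : Type*} [Fintype V] [DecidableEq V]

/-- Undirected adjacency matrix of the mixed graph with edge-multiplicity function `E`:
`(u,v)`-entry `E u v` for `u ≠ v`, and `(v,v)`-entry `2 * E v v`. -/
def Au (E : V → V → ℕ) : Matrix V V ℝ :=
  Matrix.of fun u v => if u = v then ((2 * E v v : ℕ) : ℝ) else ((E u v : ℕ) : ℝ)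

/-- Arc matrix of the mixed graph with arc-multiplicity function `A`. -/
def Bm (A : V → V → ℕ) : Matrix V V ℝ := Matrix.of fun u v => ((A u v : ℕ) : ℝ)

/-- Undirected degree `d v`. -/
def dU (E : V → V → ℕ) (v : V) : ℕ :=
  (∑ u ∈ Finset.univ.filter (fun u => u ≠ v), E v u) + 2 * E v v

/-- Out-degree `d⁺ v`. -/
def dOut (A : V → V → ℕ) (v : V) : ℕ := ∑ u, A v u

/-- In-degree `d⁻ v`. -/
def dIn (A : V → V → ℕ) (v : V) : ℕ := ∑ u, A u v

/-- Integrated adjacency matrix `𝓘(G) = [[Aᵤ, B], [Bᵀ, Aᵤ]]`. -/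
def intAdj (E A : V → V → ℕ) : Matrix (V ⊕ V) (V ⊕ V) ℝ :=
  Matrix.fromBlocks (Au E) (Bm A) (Bm A)ᵀ (Au E)

/-- Integrated degree matrix `𝓘ᴰ(G)`. -/
def intDeg (E A : V → V → ℕ) : Matrix (V ⊕ V) (V ⊕ V) ℝ :=
  Matrix.diagonal (Sum.elim (fun v => ((dU E v + dOut A v : ℕ) : ℝ))
    (fun v => ((dU E v + dIn A v : ℕ) : ℝ)))

/-- Integrated Laplacian matrix `𝓘ᴸ(G) = 𝓘ᴰ(G) - 𝓘(G)`. -/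
def intLap (E A : V → V → ℕ) : Matrix (V ⊕ V) (V ⊕ V) ℝ := intDeg E A - intAdj E A

/-- Integrated signless Laplacian matrix `𝓘Q(G) = 𝓘ᴰ(G) + 𝓘(G)`. -/
def intQ (E A : V → V → ℕ) : Matrix (V ⊕ V) (V ⊕ V) ℝ := intDeg E A + intAdj E A

/-- A mixed graph is simple: multiplicities at most 1, no loops, no directed loops. -/
def IsSimple (E A : V → V → ℕ) : Prop :=
  (∀ u v, E u v ≤ 1) ∧ (∀ u v, A u v ≤ 1) ∧ (∀ v, E v v = 0) ∧ (∀ v, A v v = 0)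

/-- Number of edges (excluding loops): `e(G) = (1/2)·Σ_{u ≠ v} E u v`. -/
noncomputable def numEdges (E : V → V → ℕ) : ℝ :=
  (∑ u, ∑ v ∈ Finset.univ.filter (fun v => v ≠ u), (E u v : ℝ)) / 2

/-- Number of loops: `l(G) = Σ_v E v v`. -/
noncomputable def numLoops (E : V → V → ℕ) : ℝ := ∑ v, (E v v : ℝ)

/-- Number of arcs (including directed loops): `a(G) = Σ_{u,v} A u v`. -/
noncomputable def numArcs (A : V → V → ℕ) : ℝ := ∑ u, ∑ v, (A u v : ℝ)

lemma intAdj_isHermitian (E A : V → V → ℕ) (hE : ∀ u v, E u v = E v u) :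
    (intAdj E A).IsHermitian := by
  have hAu : (Au E)ᵀ = Au E := by
    ext u v
    by_cases h : u = v
    · subst h; rfl
    · simp [Au, Matrix.transpose_apply, h, Ne.symm h, hE u v]
  show (intAdj E A)ᴴ = intAdj E A
  rw [Matrix.conjTranspose_eq_transpose_of_trivial]
  unfold intAdj
  rw [Matrix.fromBlocks_transpose, hAu, Matrix.transpose_transpose]

lemma intLap_isHermitian (E A : V → V → ℕ) (hE : ∀ u v, E u v = E v u) :
    (intLap E A).IsHermitian :=
  (Matrix.isHermitian_diagonal _).sub (intAdj_isHermitian E A hE)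

lemma intQ_isHermitian (E A : V → V → ℕ) (hE : ∀ u v, E u v = E v u) :
    (intQ E A).IsHermitian :=
  (Matrix.isHermitian_diagonal _).add (intAdj_isHermitian E A hE)

/-- The non-increasing rearrangement of a finite tuple of reals. -/
noncomputable def sortDesc {N : ℕ} (f : Fin N → ℝ) : Fin N → ℝ :=
  fun i => (f ∘ Tuple.sort f) i.rev

/-- The eigenvalues of the integrated Laplacian matrix `𝓘ᴸ(G)`, in non-increasing order:
`nuT E A hE i` is `ν_{i+1}(G)` (0-indexed). -/
noncomputable def nuT {n : ℕ} (E A : Fin n → Fin n → ℕ) (hE : ∀ u v, E u v = E v u) :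
    Fin (n + n) → ℝ :=
  sortDesc (fun i => (intLap_isHermitian E A hE).eigenvalues (finSumFinEquiv.symm i))

/-- The eigenvalues of the integrated signless Laplacian matrix `𝓘Q(G)`, in non-increasing
order: `xiT E A hE i` is `ξ_{i+1}(G)` (0-indexed). -/
noncomputable def xiT {n : ℕ} (E A : Fin n → Fin n → ℕ) (hE : ∀ u v, E u v = E v u) :
    Fin (n + n) → ℝ :=
  sortDesc (fun i => (intQ_isHermitian E A hE).eigenvalues (finSumFinEquiv.symm i))

/-- The eigenvalues of the integrated adjacency matrix `𝓘(G)`, in non-increasing order: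
`lamT E A hE i` is `λ_{i+1}(G)` (0-indexed). -/
noncomputable def lamT {n : ℕ} (E A : Fin n → Fin n → ℕ) (hE : ∀ u v, E u v = E v u) :
    Fin (n + n) → ℝ :=
  sortDesc (fun i => (intAdj_isHermitian E A hE).eigenvalues (finSumFinEquiv.symm i))

/-!
The integrated Laplacian is the weighted Laplacian `diag(row sums) - 𝓘(G)` of the nonnegative
symmetric matrix `𝓘(G)`. By Gershgorin's theorem its eigenvalues are nonnegative, and the
all-ones vector lies in its kernel, so `ν₂ₙ = 0`. Its trace is `4e + 2a` (loops cancel between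
degrees and diagonal), so the `2n - 1` eigenvalues `ν₁ ≥ … ≥ ν₂ₙ₋₁` have mean `(4e + 2a)/(2n - 1)`,
which lies between the smallest and the largest of them.
-/

section SortDesc

variable {N : ℕ} (f : Fin N → ℝ)

theorem sortDesc_antitone : Antitone (sortDesc f) :=
  fun _ _ hij => Tuple.monotone_sort f (Fin.rev_le_rev.mpr hij)

theorem sum_sortDesc : ∑ i, sortDesc f i = ∑ i, f i :=
  (Equiv.sum_comp Fin.revPerm _).trans (Equiv.sum_comp (Tuple.sort f) f)

theorem exists_sortDesc_eq (j : Fin N) : ∃ i, sortDesc f i = f j :=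
  ⟨((Tuple.sort f).symm j).rev, by simp [sortDesc]⟩

variable {f}

theorem sortDesc_eq_zero_of_nonneg (hf : ∀ i, 0 ≤ f i) (hz : ∃ j, f j = 0) {l : Fin N}
    (hl : l.val + 1 = N) : sortDesc f l = 0 := by
  obtain ⟨j, hj⟩ := hz
  obtain ⟨i, hi⟩ := exists_sortDesc_eq f j
  have hle : sortDesc f l ≤ 0 :=
    hj ▸ hi ▸ sortDesc_antitone f (Fin.le_def.mpr (by omega))
  exact le_antisymm hle (hf _)

theorem sum_div_mem_Icc_sortDesc (hf : ∀ i, 0 ≤ f i) (hz : ∃ j, f j = 0) {p z : Fin N}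
    (hp : p.val + 2 = N) (hz0 : z.val = 0) :
    (∑ i, f i) / ((N : ℝ) - 1) ∈ Set.Icc (sortDesc f p) (sortDesc f z) := by
  set l : Fin N := ⟨p.val + 1, by omega⟩
  have hsum : ∑ i ∈ univ.erase l, sortDesc f i = ∑ i, f i := by
    rw [← sum_sortDesc, ← add_sum_erase _ _ (mem_univ l),
      sortDesc_eq_zero_of_nonneg hf hz (by simp [l, hp]), zero_add]
  have hcard : ((univ.erase l).card : ℝ) = (N : ℝ) - 1 := by
    rw [card_erase_of_mem (mem_univ l), card_univ, Fintype.card_fin, Nat.cast_sub (by omega)]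
    simp
  have hpos : (0 : ℝ) < (N : ℝ) - 1 := by
    rw [← hcard]; exact_mod_cast (card_pos.mpr ⟨p, by simp [l, Fin.ext_iff]⟩)
  have hlow : ∀ i ∈ univ.erase l, sortDesc f p ≤ sortDesc f i := fun i hi =>
    sortDesc_antitone f (Fin.le_def.mpr (by
      have := Fin.val_ne_of_ne (ne_of_mem_erase hi); simp only [l] at this; omega))
  have hup : ∀ i ∈ univ.erase l, sortDesc f i ≤ sortDesc f z := fun i _ =>
    sortDesc_antitone f (Fin.le_def.mpr (by omega))
  have h1 := card_nsmul_le_sum _ _ _ hlow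
  have h2 := sum_le_card_nsmul _ _ _ hup
  rw [nsmul_eq_mul, hcard, hsum] at h1 h2
  constructor
  · rw [le_div_iff₀ hpos]; linarith
  · rw [div_le_iff₀ hpos]; linarith

end SortDesc

section Spectrum

variable {m : Type*} [Fintype m] [DecidableEq m]

theorem Matrix.IsHermitian.eigenvalues_nonneg_of_sum_abs_le_diag {M : Matrix m m ℝ}
    (hM : M.IsHermitian) (hdom : ∀ k, ∑ j ∈ univ.erase k, |M k j| ≤ M k k) (i : m) :
    0 ≤ hM.eigenvalues i := by
  have hμ : Module.End.HasEigenvalue (toLin' M) (hM.eigenvalues i) :=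
    Module.End.hasEigenvalue_of_hasEigenvector
      ⟨Module.End.mem_eigenspace_iff.mpr (by simpa using hM.mulVec_eigenvectorBasis i),
        (WithLp.ofLp_eq_zero 2).ne.2 <| hM.eigenvectorBasis.orthonormal.ne_zero i⟩
  obtain ⟨k, hk⟩ := eigenvalue_mem_ball hμ
  rw [Metric.mem_closedBall, Real.dist_eq] at hk
  simp only [Real.norm_eq_abs] at hk
  linarith [neg_abs_le (hM.eigenvalues i - M k k), hdom k]

theorem Matrix.IsHermitian.exists_eigenvalues_eq_zero {M : Matrix m m ℝ} (hM : M.IsHermitian)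
    {v : m → ℝ} (hv : v ≠ 0) (hMv : M *ᵥ v = 0) : ∃ i, hM.eigenvalues i = 0 := by
  have hdet : M.det = 0 := exists_mulVec_eq_zero_iff.mp ⟨v, hv, hMv⟩
  rw [hM.det_eq_prod_eigenvalues] at hdet
  obtain ⟨i, -, hi⟩ := prod_eq_zero_iff.mp hdet
  exact ⟨i, by exact_mod_cast hi⟩

def weightedLaplacian (W : Matrix m m ℝ) : Matrix m m ℝ :=
  diagonal (fun i => ∑ j, W i j) - W

theorem weightedLaplacian_mulVec_one (W : Matrix m m ℝ) :
    weightedLaplacian W *ᵥ (fun _ => 1) = 0 := by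
  ext i
  rw [weightedLaplacian, sub_mulVec, Pi.sub_apply, mulVec_diagonal]
  simp [mulVec, dotProduct]

theorem weightedLaplacian_sum_abs_le_diag {W : Matrix m m ℝ} (hW : ∀ i j, 0 ≤ W i j) (k : m) :
    ∑ j ∈ univ.erase k, |weightedLaplacian W k j| ≤ weightedLaplacian W k k := by
  have hoff : ∀ j ∈ univ.erase k, |weightedLaplacian W k j| = W k j := fun j hj => by
    simp [weightedLaplacian, diagonal_apply_ne _ (ne_of_mem_erase hj).symm, abs_of_nonneg (hW k j)]
  rw [sum_congr rfl hoff, weightedLaplacian, Matrix.sub_apply, diagonal_apply_eq,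
    ← add_sum_erase _ _ (mem_univ k), add_sub_cancel_left]

end Spectrum

theorem sum_Au_row (E : V → V → ℕ) (v : V) : ∑ u, Au E v u = dU E v := by
  rw [← add_sum_erase _ _ (mem_univ v), dU, filter_ne', Nat.cast_add, Nat.cast_sum, add_comm]
  congr 1
  · exact sum_congr rfl fun u hu => by simp [Au, (ne_of_mem_erase hu).symm]
  · simp [Au]

theorem intLap_eq_weightedLaplacian (E A : V → V → ℕ) :
    intLap E A = weightedLaplacian (intAdj E A) := by
  rw [intLap, weightedLaplacian, intDeg]
  congr 2
  funext s
  rcases s with v | v <;>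
    simp [intAdj, Fintype.sum_sum_type, sum_Au_row, Bm, dOut, dIn, add_comm]

theorem intAdj_nonneg (E A : V → V → ℕ) (s t : V ⊕ V) : 0 ≤ intAdj E A s t := by
  rcases s with v | v <;> rcases t with u | u <;>
    simp only [intAdj, Au, Bm, fromBlocks_apply₁₁, fromBlocks_apply₁₂, fromBlocks_apply₂₁,
      fromBlocks_apply₂₂, transpose_apply, of_apply] <;> positivity

theorem intLap_eigenvalues_nonneg (E A : V → V → ℕ) (hE : ∀ u v, E u v = E v u) (i : V ⊕ V) :
    0 ≤ (intLap_isHermitian E A hE).eigenvalues i :=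
  (intLap_isHermitian E A hE).eigenvalues_nonneg_of_sum_abs_le_diag (fun k => by
    simpa only [intLap_eq_weightedLaplacian] using
      weightedLaplacian_sum_abs_le_diag (intAdj_nonneg E A) k) i

theorem exists_intLap_eigenvalues_eq_zero [Nonempty V] (E A : V → V → ℕ)
    (hE : ∀ u v, E u v = E v u) : ∃ i, (intLap_isHermitian E A hE).eigenvalues i = 0 :=
  (intLap_isHermitian E A hE).exists_eigenvalues_eq_zero
    (Function.ne_iff.mpr ⟨Classical.arbitrary _, one_ne_zero⟩)
    (by rw [intLap_eq_weightedLaplacian]; exact weightedLaplacian_mulVec_one _)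

theorem sum_dU (E : V → V → ℕ) : ∑ v, (dU E v : ℝ) = 2 * numEdges E + (Au E).trace := by
  simp only [dU, numEdges, Matrix.trace, Matrix.diag, Au, of_apply, if_true]
  push_cast
  rw [sum_add_distrib]
  ring

theorem trace_intAdj (E A : V → V → ℕ) : (intAdj E A).trace = 2 * (Au E).trace := by
  simp [intAdj, Matrix.trace, Fintype.sum_sum_type, two_mul]

theorem trace_intLap (E A : V → V → ℕ) :
    (intLap E A).trace = 4 * numEdges E + 2 * numArcs A := by
  have hout : ∑ v, (dOut A v : ℝ) = numArcs A := by simp [dOut, numArcs]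
  have hin : ∑ v, (dIn A v : ℝ) = numArcs A := by
    simp only [dIn, numArcs, Nat.cast_sum]
    exact sum_comm
  rw [intLap, trace_sub, intDeg, trace_diagonal, trace_intAdj, Fintype.sum_sum_type]
  simp only [Sum.elim_inl, Sum.elim_inr, Nat.cast_add, sum_add_distrib, sum_dU, hout, hin]
  ring

/-- for every simple mixed graph `G` on `n ≥ 1` vertices,
`ν_{2n−1}(G) ≤ (4e(G) + 2a(G))/(2n − 1) ≤ ν₁(G)`. -/
theorem stmt7 (n : ℕ) (hn : 0 < n) (E A : Fin n → Fin n → ℕ)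
    (hE : ∀ u v, E u v = E v u) :
    nuT E A hE ⟨n + n - 2, by omega⟩ ≤
        (4 * numEdges E + 2 * numArcs A) / (2 * (n : ℝ) - 1) ∧
      (4 * numEdges E + 2 * numArcs A) / (2 * (n : ℝ) - 1) ≤ nuT E A hE ⟨0, by omega⟩ := by
  have : Nonempty (Fin n) := ⟨⟨0, hn⟩⟩
  have hL := intLap_isHermitian E A hE
  have hsum : ∑ i, hL.eigenvalues (finSumFinEquiv.symm i) = 4 * numEdges E + 2 * numArcs A := by
    rw [Equiv.sum_comp finSumFinEquiv.symm hL.eigenvalues, ← trace_intLap E A,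
      hL.trace_eq_sum_eigenvalues]
    rfl
  obtain ⟨s, hs⟩ := exists_intLap_eigenvalues_eq_zero E A hE
  have hmean := sum_div_mem_Icc_sortDesc (f := fun i => hL.eigenvalues (finSumFinEquiv.symm i))
    (p := ⟨n + n - 2, by omega⟩) (z := ⟨0, by omega⟩)
    (fun i => intLap_eigenvalues_nonneg E A hE _) ⟨finSumFinEquiv s, by simpa using hs⟩
    (by simp only; omega) rfl
  rw [hsum, show ((n + n : ℕ) : ℝ) - 1 = 2 * n - 1 by push_cast; ring] at hmean
  exact hmean
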